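/- Let α, β, k be real numbers with α > 0, β > −1 and 0 < k < β + 1, and let s₁₁, s₂₁ be real numbers satisfying 0 < s₂₁ ≤ (α+1)/((α+β+3)(α+β−k+2)) and s₂₁ < s₁₁ ≤ s₂₁ + α(α+1)(k+1)(α+β−k+2)/((β−k+1)(α+β+2)(α+β+3)). Define α₀ = [[ ((α+β+3)(β−k+1)/((k+1)(α+1)(α+β−k+1)))·s₁₁, ((α+β+3)(β−k+1)/((k+1)(α+1)))·s₂₁ ], [ s₂₁, (α+β−k+1)·s₂₁ ]]. Then α₀ is invertible and the matrix M = α₀^{−1}μ₀ − μ₋₁ is symmetric positive semidefinite, i.e. Mᵀ = M and xᵀMx ≥ 0 for every x ∈ ℝ². -/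
import Mathlib


open Matrix

/-- The zeroth moment `μ₀` of the weight `W` of the `d = 2` Jacobi-type
example. -/
noncomputable def mu0 (α β k : ℝ) : Matrix (Fin 2) (Fin 2) ℝ :=
  (Real.Gamma (α + 1) * Real.Gamma (β + 2) * (α + β - k + 2) /
      Real.Gamma (α + β + 3)) •
    !![1, 0; 0, (α + 1) * (k + 1) / ((α + β + 3) * (β - k + 1))]

/-- The `(-1)`-st moment `μ₋₁` of the weight `W` of the `d = 2` Jacobi-type
example. -/
noncomputable def muM1 (α β k : ℝ) : Matrix (Fin 2) (Fin 2) ℝ :=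
  (Real.Gamma α * Real.Gamma (β + 2) / Real.Gamma (α + β + 2)) •
    !![α + β - k + 1, -1;
       -1, ((α + 1) * (k + 1) * (α + β - k + 2) - k * (β - k + 1)) /
         ((α + β + 2) * (β - k + 1))]

lemma smul_fin2 (r a b c d : ℝ) : r • !![a,b;c,d] = !![r*a,r*b;r*c,r*d] := by
  ext i j; fin_cases i <;> fin_cases j <;> simp

lemma sub_fin2 (a b c d e f g h : ℝ) :
    !![a,b;c,d] - !![e,f;g,h] = !![a-e,b-f;c-g,d-h] := by
  ext i j; fin_cases i <;> fin_cases j <;> simp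

lemma fin2_congr {a b c d a' b' c' d' : ℝ} (h1 : a = a') (h2 : b = b')
    (h3 : c = c') (h4 : d = d') : !![a,b;c,d] = !![a',b';c',d'] := by
  rw [h1, h2, h3, h4]

lemma transpose_fin2 (a b c d : ℝ) : (!![a,b;c,d])ᵀ = !![a,c;b,d] := by
  ext i j; fin_cases i <;> fin_cases j <;> simp

/-- PSD certificate for a symmetric `2 × 2` matrix with `c * m12 = -m11` and
`c^2 * m22 = c * E + m11` for nonnegative `m11`, `E` and positive `c`. -/
lemma quad_mat (c m11 m12 m22 E : ℝ) (hc : 0 < c) (h11 : 0 ≤ m11) (hE : 0 ≤ E)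
    (h12 : c * m12 = -m11) (h22 : c^2 * m22 = c*E + m11) (x : Fin 2 → ℝ) :
    0 ≤ x ⬝ᵥ (!![m11,m12;m12,m22]).mulVec x := by
  simp [dotProduct, Matrix.mulVec, Fin.sum_univ_two]
  have key : c^2*(x 0*(m11*x 0+m12*x 1)+x 1*(m12*x 0+m22*x 1))
      = m11*(c*x 0 - x 1)^2 + (c*E)*(x 1)^2 := by
    linear_combination (2*c*x 0*x 1)*h12 + (x 1)^2*h22
  nlinarith [key, mul_nonneg h11 (sq_nonneg (c*x 0 - x 1)),
    mul_nonneg (mul_nonneg hc.le hE) (sq_nonneg (x 1)), mul_pos hc hc]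

set_option maxHeartbeats 1000000 in
/-- The explicit right inverse of `α₀`. -/
lemma alpha0_right_inv (α β k s11 s21 : ℝ) (hα : 0 < α) (hβ : β > -1)
    (hk : 0 < k) (hkβ : k < β + 1) (h1 : 0 < s21) (h3 : s21 < s11) :
    (!![(α + β + 3) * (β - k + 1) / ((k + 1) * (α + 1) * (α + β - k + 1)) * s11,
          (α + β + 3) * (β - k + 1) / ((k + 1) * (α + 1)) * s21;
          s21, (α + β - k + 1) * s21] : Matrix (Fin 2) (Fin 2) ℝ) *
      !![(α + β - k + 1) * ((k + 1) * (α + 1)) / ((α + β + 3) * (β - k + 1) * (s11 - s21)),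
         -(1 / (s11 - s21));
         -((k + 1) * (α + 1) / ((α + β + 3) * (β - k + 1) * (s11 - s21))),
         s11 / ((α + β - k + 1) * s21 * (s11 - s21))] = 1 := by
  have hR : (0:ℝ) < β - k + 1 := by linarith
  have hC : (0:ℝ) < α + β - k + 1 := by linarith
  have hS : (0:ℝ) < α + β + 3 := by linarith
  have hk1 : (0:ℝ) < k + 1 := by linarith
  have hα1 : (0:ℝ) < α + 1 := by linarith
  have hD : (0:ℝ) < s11 - s21 := by linarith
  have hR0 := hR.ne'
  have hC0 := hC.ne'
  have hS0 := hS.ne'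
  have hk10 := hk1.ne'
  have hα10 := hα1.ne'
  have hD0 := hD.ne'
  have hs0 := h1.ne'
  rw [Matrix.mul_fin_two, Matrix.one_fin_two]
  refine fin2_congr ?_ ?_ ?_ ?_ <;> field_simp <;> ring

set_option maxHeartbeats 1000000 in
/-- Explicit form of the Dirac mass `M = α₀⁻¹ μ₀ - μ₋₁`. -/
lemma M_explicit (α β k s11 s21 : ℝ) (hα : 0 < α) (hβ : β > -1)
    (hk : 0 < k) (hkβ : k < β + 1) (h1 : 0 < s21) (h3 : s21 < s11) :
    (!![(α + β + 3) * (β - k + 1) / ((k + 1) * (α + 1) * (α + β - k + 1)) * s11,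
          (α + β + 3) * (β - k + 1) / ((k + 1) * (α + 1)) * s21;
          s21, (α + β - k + 1) * s21] : Matrix (Fin 2) (Fin 2) ℝ)⁻¹ * mu0 α β k -
       muM1 α β k =
    !![Real.Gamma α * Real.Gamma (β + 2) / Real.Gamma (α + β + 2) *
        ((α+β-k+1) * (α*(α+1)*(k+1)*(α+β-k+2) - (α+β+2)*(α+β+3)*(β-k+1)*(s11-s21))) /
        ((α+β+2)*(α+β+3)*(β-k+1)*(s11-s21)),
      -(Real.Gamma α * Real.Gamma (β + 2) / Real.Gamma (α + β + 2) *
        (α*(α+1)*(k+1)*(α+β-k+2) - (α+β+2)*(α+β+3)*(β-k+1)*(s11-s21)) /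
        ((α+β+2)*(α+β+3)*(β-k+1)*(s11-s21)));
      -(Real.Gamma α * Real.Gamma (β + 2) / Real.Gamma (α + β + 2) *
        (α*(α+1)*(k+1)*(α+β-k+2) - (α+β+2)*(α+β+3)*(β-k+1)*(s11-s21)) /
        ((α+β+2)*(α+β+3)*(β-k+1)*(s11-s21))),
      Real.Gamma α * Real.Gamma (β + 2) / Real.Gamma (α + β + 2) *
        (α*(k+1)*(α+β-k+2)*((α+1) - (α+β+3)*(α+β-k+2)*s21)*(s11-s21) +
          (α*(α+1)*(k+1)*(α+β-k+2) - (α+β+2)*(α+β+3)*(β-k+1)*(s11-s21))*s21) /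
        ((α+β-k+1)*((α+β+2)*(α+β+3)*(β-k+1)*(s11-s21))*s21)] := by
  have hR : (0:ℝ) < β - k + 1 := by linarith
  have hC : (0:ℝ) < α + β - k + 1 := by linarith
  have hQ : (0:ℝ) < α + β - k + 2 := by linarith
  have hP : (0:ℝ) < α + β + 2 := by linarith
  have hS : (0:ℝ) < α + β + 3 := by linarith
  have hk1 : (0:ℝ) < k + 1 := by linarith
  have hα1 : (0:ℝ) < α + 1 := by linarith
  have hD : (0:ℝ) < s11 - s21 := by linarith
  have hga : 0 < Real.Gamma α := Real.Gamma_pos_of_pos hα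
  have hgb : 0 < Real.Gamma (β + 2) := Real.Gamma_pos_of_pos (by linarith)
  have hgab : 0 < Real.Gamma (α + β + 2) := Real.Gamma_pos_of_pos (by linarith)
  have hR0 := hR.ne'
  have hC0 := hC.ne'
  have hQ0 := hQ.ne'
  have hP0 := hP.ne'
  have hS0 := hS.ne'
  have hk10 := hk1.ne'
  have hα10 := hα1.ne'
  have hD0 := hD.ne'
  have hs0 := h1.ne'
  have hga0 := hga.ne'
  have hgb0 := hgb.ne'
  have hgab0 := hgab.ne'
  have hG1 : Real.Gamma (α + 1) = α * Real.Gamma α := Real.Gamma_add_one hα.ne'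
  have hG2 : Real.Gamma (α + β + 3) = (α + β + 2) * Real.Gamma (α + β + 2) := by
    rw [show α + β + 3 = (α + β + 2) + 1 by ring, Real.Gamma_add_one hP.ne']
  rw [Matrix.inv_eq_right_inv (alpha0_right_inv α β k s11 s21 hα hβ hk hkβ h1 h3),
    mu0, muM1, hG1, hG2, smul_fin2, smul_fin2, Matrix.mul_fin_two, sub_fin2]
  refine fin2_congr ?_ ?_ ?_ ?_
  · simp only [mul_zero, mul_one, zero_add, add_zero, mul_neg_one, neg_neg,
      mul_neg, neg_mul, one_mul, neg_zero, div_mul_div_comm]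
    simp only [div_mul_eq_mul_div, div_div]
    rw [show Real.Gamma α * Real.Gamma (β + 2) * (α + β - k + 1) / Real.Gamma (α + β + 2)
        = Real.Gamma α * Real.Gamma (β + 2) * (α + β - k + 1) *
            ((α + β + 3) * (β - k + 1) * (s11 - s21) * (α + β + 2)) /
          (Real.Gamma (α + β + 2) *
            ((α + β + 3) * (β - k + 1) * (s11 - s21) * (α + β + 2)))
        from (mul_div_mul_right _ _ (by apply_rules [mul_ne_zero])).symm,
      show Real.Gamma (α + β + 2) *
            ((α + β + 3) * (β - k + 1) * (s11 - s21) * (α + β + 2))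
        = (α + β + 3) * (β - k + 1) * (s11 - s21) * ((α + β + 2) * Real.Gamma (α + β + 2))
        from by ring,
      show Real.Gamma (α + β + 2) * ((α + β + 2) * (α + β + 3) * (β - k + 1) * (s11 - s21))
        = (α + β + 3) * (β - k + 1) * (s11 - s21) * ((α + β + 2) * Real.Gamma (α + β + 2))
        from by ring,
      div_sub_div_same]
    congr 1
    ring
  · simp only [mul_zero, mul_one, zero_add, add_zero, mul_neg_one, neg_neg,
      mul_neg, neg_mul, one_mul, neg_zero, div_mul_div_comm]
    simp only [div_mul_eq_mul_div, div_div]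
    rw [neg_sub_neg,
      show Real.Gamma α * Real.Gamma (β + 2) / Real.Gamma (α + β + 2)
        = Real.Gamma α * Real.Gamma (β + 2) *
            ((s11 - s21) * ((α + β + 2) * ((α + β + 3) * (β - k + 1)))) /
          (Real.Gamma (α + β + 2) *
            ((s11 - s21) * ((α + β + 2) * ((α + β + 3) * (β - k + 1)))))
        from (mul_div_mul_right _ _ (by apply_rules [mul_ne_zero])).symm,
      show Real.Gamma (α + β + 2) *
            ((s11 - s21) * ((α + β + 2) * ((α + β + 3) * (β - k + 1))))
        = (s11 - s21) * ((α + β + 2) * Real.Gamma (α + β + 2) * ((α + β + 3) * (β - k + 1)))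
        from by ring,
      show Real.Gamma (α + β + 2) * ((α + β + 2) * (α + β + 3) * (β - k + 1) * (s11 - s21))
        = (s11 - s21) * ((α + β + 2) * Real.Gamma (α + β + 2) * ((α + β + 3) * (β - k + 1)))
        from by ring,
      div_sub_div_same, ← neg_div]
    congr 1
    ring
  · simp only [mul_zero, mul_one, zero_add, add_zero, mul_neg_one, neg_neg,
      mul_neg, neg_mul, one_mul, neg_zero, div_mul_div_comm]
    simp only [div_mul_eq_mul_div, div_div]
    rw [neg_sub_neg,
      show Real.Gamma α * Real.Gamma (β + 2) / Real.Gamma (α + β + 2)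
        = Real.Gamma α * Real.Gamma (β + 2) *
            ((α + β + 3) * (β - k + 1) * (s11 - s21) * (α + β + 2)) /
          (Real.Gamma (α + β + 2) *
            ((α + β + 3) * (β - k + 1) * (s11 - s21) * (α + β + 2)))
        from (mul_div_mul_right _ _ (by apply_rules [mul_ne_zero])).symm,
      show Real.Gamma (α + β + 2) *
            ((α + β + 3) * (β - k + 1) * (s11 - s21) * (α + β + 2))
        = (α + β + 3) * (β - k + 1) * (s11 - s21) * ((α + β + 2) * Real.Gamma (α + β + 2))
        from by ring,
      show Real.Gamma (α + β + 2) * ((α + β + 2) * (α + β + 3) * (β - k + 1) * (s11 - s21))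
        = (α + β + 3) * (β - k + 1) * (s11 - s21) * ((α + β + 2) * Real.Gamma (α + β + 2))
        from by ring,
      div_sub_div_same, ← neg_div]
    congr 1
    ring
  · simp only [mul_zero, mul_one, zero_add, add_zero, mul_neg_one, neg_neg,
      mul_neg, neg_mul, one_mul, neg_zero, div_mul_div_comm]
    simp only [div_mul_eq_mul_div, div_div]
    rw [show Real.Gamma α * Real.Gamma (β + 2) *
            ((α + 1) * (k + 1) * (α + β - k + 2) - k * (β - k + 1)) /
          (Real.Gamma (α + β + 2) * ((α + β + 2) * (β - k + 1)))
        = Real.Gamma α * Real.Gamma (β + 2) *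
            ((α + 1) * (k + 1) * (α + β - k + 2) - k * (β - k + 1)) *
            ((α + β - k + 1) * s21 * ((s11 - s21) * (α + β + 3))) /
          (Real.Gamma (α + β + 2) * ((α + β + 2) * (β - k + 1)) *
            ((α + β - k + 1) * s21 * ((s11 - s21) * (α + β + 3))))
        from (mul_div_mul_right _ _ (by apply_rules [mul_ne_zero])).symm,
      show Real.Gamma (α + β + 2) * ((α + β + 2) * (β - k + 1)) *
            ((α + β - k + 1) * s21 * ((s11 - s21) * (α + β + 3)))
        = (α + β - k + 1) * s21 * (s11 - s21) *
            ((α + β + 2) * Real.Gamma (α + β + 2) * ((α + β + 3) * (β - k + 1)))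
        from by ring,
      show Real.Gamma (α + β + 2) *
            ((α + β - k + 1) * ((α + β + 2) * (α + β + 3) * (β - k + 1) * (s11 - s21)) * s21)
        = (α + β - k + 1) * s21 * (s11 - s21) *
            ((α + β + 2) * Real.Gamma (α + β + 2) * ((α + β + 3) * (β - k + 1)))
        from by ring,
      div_sub_div_same]
    congr 1
    ring

set_option maxHeartbeats 1000000 in
/-- For parameters `s₁₁, s₂₁` in the stated range, `α₀` is invertible and the
Dirac mass `M = α₀⁻¹μ₀ − μ₋₁` is symmetric positive semidefinite. -/
theorem stmt_18 (α β k s11 s21 : ℝ) (hα : 0 < α) (hβ : β > -1)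
    (hk : 0 < k) (hkβ : k < β + 1)
    (h1 : 0 < s21) (h2 : s21 ≤ (α + 1) / ((α + β + 3) * (α + β - k + 2)))
    (h3 : s21 < s11)
    (h4 : s11 ≤ s21 + α * (α + 1) * (k + 1) * (α + β - k + 2) /
      ((β - k + 1) * (α + β + 2) * (α + β + 3))) :
    IsUnit
      (!![(α + β + 3) * (β - k + 1) / ((k + 1) * (α + 1) * (α + β - k + 1)) * s11,
          (α + β + 3) * (β - k + 1) / ((k + 1) * (α + 1)) * s21;
          s21, (α + β - k + 1) * s21] : Matrix (Fin 2) (Fin 2) ℝ) ∧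
    ((!![(α + β + 3) * (β - k + 1) / ((k + 1) * (α + 1) * (α + β - k + 1)) * s11,
         (α + β + 3) * (β - k + 1) / ((k + 1) * (α + 1)) * s21;
         s21, (α + β - k + 1) * s21] : Matrix (Fin 2) (Fin 2) ℝ)⁻¹ * mu0 α β k -
       muM1 α β k)ᵀ =
      (!![(α + β + 3) * (β - k + 1) / ((k + 1) * (α + 1) * (α + β - k + 1)) * s11,
          (α + β + 3) * (β - k + 1) / ((k + 1) * (α + 1)) * s21;
          s21, (α + β - k + 1) * s21] : Matrix (Fin 2) (Fin 2) ℝ)⁻¹ * mu0 α β k -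
        muM1 α β k ∧
    ∀ x : Fin 2 → ℝ,
      0 ≤ x ⬝ᵥ
        ((!![(α + β + 3) * (β - k + 1) / ((k + 1) * (α + 1) * (α + β - k + 1)) * s11,
             (α + β + 3) * (β - k + 1) / ((k + 1) * (α + 1)) * s21;
             s21, (α + β - k + 1) * s21] : Matrix (Fin 2) (Fin 2) ℝ)⁻¹ *
            mu0 α β k - muM1 α β k).mulVec x := by
  have hR : (0:ℝ) < β - k + 1 := by linarith
  have hC : (0:ℝ) < α + β - k + 1 := by linarith
  have hQ : (0:ℝ) < α + β - k + 2 := by linarith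
  have hP : (0:ℝ) < α + β + 2 := by linarith
  have hS : (0:ℝ) < α + β + 3 := by linarith
  have hk1 : (0:ℝ) < k + 1 := by linarith
  have hα1 : (0:ℝ) < α + 1 := by linarith
  have hD : (0:ℝ) < s11 - s21 := by linarith
  have hga : 0 < Real.Gamma α := Real.Gamma_pos_of_pos hα
  have hgb : 0 < Real.Gamma (β + 2) := Real.Gamma_pos_of_pos (by linarith)
  have hgab : 0 < Real.Gamma (α + β + 2) := Real.Gamma_pos_of_pos (by linarith)
  have hg : 0 < Real.Gamma α * Real.Gamma (β + 2) / Real.Gamma (α + β + 2) := by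
    positivity
  have hden : 0 < (α+β+2)*(α+β+3)*(β-k+1)*(s11-s21) := by positivity
  have hN1 : 0 ≤ α*(α+1)*(k+1)*(α+β-k+2) - (α+β+2)*(α+β+3)*(β-k+1)*(s11-s21) := by
    have h4' : (s11 - s21) * ((β-k+1)*(α+β+2)*(α+β+3)) ≤ α*(α+1)*(k+1)*(α+β-k+2) := by
      rw [← le_div_iff₀ (by positivity)]; linarith
    nlinarith [h4']
  have hN2 : 0 ≤ (α+1) - (α+β+3)*(α+β-k+2)*s21 := by
    have h2' : s21 * ((α+β+3)*(α+β-k+2)) ≤ α + 1 := by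
      rw [← le_div_iff₀ (by positivity)]; linarith
    nlinarith [h2']
  have hAB := alpha0_right_inv α β k s11 s21 hα hβ hk hkβ h1 h3
  have hM := M_explicit α β k s11 s21 hα hβ hk hkβ h1 h3
  refine ⟨⟨⟨_, _, hAB, mul_eq_one_comm.mp hAB⟩, rfl⟩, ?_, ?_⟩
  · rw [hM, transpose_fin2]
  · intro x
    rw [hM]
    refine quad_mat (α+β-k+1) _ _ _
      (Real.Gamma α * Real.Gamma (β + 2) / Real.Gamma (α + β + 2) *
        ((α+β-k+1) * (α*(k+1)*(α+β-k+2)*((α+1) - (α+β+3)*(α+β-k+2)*s21)) * (s11-s21)) /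
        ((α+β-k+1)*((α+β+2)*(α+β+3)*(β-k+1)*(s11-s21))*s21))
      hC ?_ ?_ ?_ ?_ x
    · exact div_nonneg (mul_nonneg hg.le (mul_nonneg hC.le hN1)) hden.le
    · exact div_nonneg (mul_nonneg hg.le (mul_nonneg (mul_nonneg hC.le
        (mul_nonneg (mul_pos (mul_pos hα hk1) hQ).le hN2)) hD.le))
        (mul_pos (mul_pos hC (mul_pos (mul_pos (mul_pos hP hS) hR) hD)) h1).le
    · ring
    · rw [show Real.Gamma α * Real.Gamma (β + 2) / Real.Gamma (α + β + 2) *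
            ((α+β-k+1) * (α*(α+1)*(k+1)*(α+β-k+2) -
              (α+β+2)*(α+β+3)*(β-k+1)*(s11-s21))) /
            ((α+β+2)*(α+β+3)*(β-k+1)*(s11-s21))
          = Real.Gamma α * Real.Gamma (β + 2) / Real.Gamma (α + β + 2) *
            ((α+β-k+1) * (α*(α+1)*(k+1)*(α+β-k+2) -
              (α+β+2)*(α+β+3)*(β-k+1)*(s11-s21))) *
              ((α+β-k+1)*s21) /
            ((α+β+2)*(α+β+3)*(β-k+1)*(s11-s21) * ((α+β-k+1)*s21))
          from (mul_div_mul_right _ _ (mul_ne_zero hC.ne' h1.ne')).symm,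
        show (α+β+2)*(α+β+3)*(β-k+1)*(s11-s21) * ((α+β-k+1)*s21)
          = (α+β-k+1)*((α+β+2)*(α+β+3)*(β-k+1)*(s11-s21))*s21 from by ring]
      ring
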